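/- Let Ω ⊂ Ĉ be a domain with ∞ ∉ Ω whose boundary contains at least two points, and let D = dist_e(0, Ĉ \ Ω). Then the Euclidean and spherical quasihyperbolic metrics on Ω satisfy (π√2)⁻¹ · k^e_Ω ≤ k^σ_Ω ≤ 3(2 + D) · k^e_Ω. -/

import Mathlib

open Set Metric Filter Topology
open scoped ENNReal

noncomputable section

/-- The spherical metric between two finite points of the Riemann sphere. -/
def sphDistC (z w : ℂ) : ℝ :=
  2 * Real.arcsin (‖z - w‖ /
    (Real.sqrt (1 + ‖z‖ ^ 2) * Real.sqrt (1 + ‖w‖ ^ 2)))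

/-- The spherical distance from `z ∈ ℂ` to `Ĉ \ Ω` for a domain `Ω ⊆ ℂ` (so `∞ ∉ Ω`). -/
def sphDistToCompl (Ω : Set ℂ) (z : ℂ) : ℝ :=
  min (2 * Real.arcsin (1 / Real.sqrt (1 + ‖z‖ ^ 2))) (sInf (sphDistC z '' Ωᶜ))

/-- The distance obtained by integrating a conformal density `ρ` along smooth curves in `Ω`. -/
def qhDist (ρ : ℂ → ℝ) (Ω : Set ℂ) (x y : ℂ) : ℝ :=
  sInf {L : ℝ | ∃ γ : ℝ → ℂ, γ 0 = x ∧ γ 1 = y ∧ Set.MapsTo γ (Set.Icc 0 1) Ω ∧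
    ContDiffOn ℝ 1 γ (Set.Icc 0 1) ∧
    L = ∫ t in (0:ℝ)..1, ρ (γ t) * ‖derivWithin γ (Set.Icc 0 1) t‖}

/-!
Both quasihyperbolic metrics integrate a density along the same smooth curves, so it suffices
to compare the densities pointwise, i.e. `(1 + |z|²) dist_σ(z, Ωᶜ)` with `dist_e(z, Ωᶜ)`.
With `a = √(1 + |z|²)` and `b = √(1 + |w|²)`, the spherical distance `2 arcsin (|z - w| / (a b))`
lies between `2 |z - w| / (a b)` and `π |z - w| / (a b)`, and the distance to `∞` between `2 / a`
and `π / a`. Together with `|a - b| ≤ |z - w|` this gives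
`(1 + |z|²) dist_σ ≤ 2π dist_e` and `2 dist_e ≤ (2 + D) (1 + |z|²) dist_σ`.
-/

open MeasureTheory Real

lemma one_le_sqrt_one_add_norm_sq (z : ℂ) : 1 ≤ √(1 + ‖z‖ ^ 2) :=
  Real.one_le_sqrt.2 (le_add_of_nonneg_right (by positivity))

lemma norm_le_sqrt_one_add_norm_sq (z : ℂ) : ‖z‖ ≤ √(1 + ‖z‖ ^ 2) :=
  Real.le_sqrt_of_sq_le (by linarith)

lemma sqrt_one_add_norm_sq_le_add_norm_sub (z w : ℂ) :
    √(1 + ‖z‖ ^ 2) ≤ √(1 + ‖w‖ ^ 2) + ‖z - w‖ := by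
  have hz : ‖z‖ ≤ ‖w‖ + ‖z - w‖ := norm_le_insert' z w
  rw [Real.sqrt_le_left (by positivity), add_sq, Real.sq_sqrt (by positivity)]
  nlinarith [pow_le_pow_left₀ (norm_nonneg z) hz 2,
    mul_le_mul_of_nonneg_right (norm_le_sqrt_one_add_norm_sq w) (norm_nonneg (z - w))]

lemma norm_sub_le_sqrt_mul_sqrt (z w : ℂ) :
    ‖z - w‖ ≤ √(1 + ‖z‖ ^ 2) * √(1 + ‖w‖ ^ 2) := by
  rw [← Real.sqrt_mul (by positivity)]
  refine (norm_sub_le z w).trans (Real.le_sqrt_of_sq_le ?_)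
  nlinarith [sq_nonneg (1 - ‖z‖ * ‖w‖)]

lemma Real.self_le_arcsin {t : ℝ} (h₀ : 0 ≤ t) (h₁ : t ≤ 1) : t ≤ arcsin t := by
  simpa [sin_arcsin (by linarith) h₁] using sin_le (arcsin_nonneg.2 h₀)

lemma Real.arcsin_le_pi_div_two_mul {t : ℝ} (h₀ : 0 ≤ t) (h₁ : t ≤ 1) :
    arcsin t ≤ π / 2 * t := by
  have h := mul_le_sin (arcsin_nonneg.2 h₀) (arcsin_le_pi_div_two t)
  rw [sin_arcsin (by linarith) h₁] at h
  rw [div_mul_eq_mul_div, div_le_iff₀ pi_pos] at h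
  linarith

lemma chordal_mem_Icc (z w : ℂ) :
    ‖z - w‖ / (√(1 + ‖z‖ ^ 2) * √(1 + ‖w‖ ^ 2)) ∈ Icc (0 : ℝ) 1 := by
  have := one_le_sqrt_one_add_norm_sq z
  have := one_le_sqrt_one_add_norm_sq w
  exact ⟨by positivity, (div_le_one (by positivity)).2 (norm_sub_le_sqrt_mul_sqrt z w)⟩

lemma two_mul_chordal_le_sphDistC (z w : ℂ) :
    2 * ‖z - w‖ / (√(1 + ‖z‖ ^ 2) * √(1 + ‖w‖ ^ 2)) ≤ sphDistC z w := by
  rw [mul_div_assoc, sphDistC]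
  gcongr
  exact self_le_arcsin (chordal_mem_Icc z w).1 (chordal_mem_Icc z w).2

lemma sphDistC_le_pi_mul_chordal (z w : ℂ) :
    sphDistC z w ≤ π * ‖z - w‖ / (√(1 + ‖z‖ ^ 2) * √(1 + ‖w‖ ^ 2)) := by
  have := arcsin_le_pi_div_two_mul (chordal_mem_Icc z w).1 (chordal_mem_Icc z w).2
  rw [sphDistC, mul_div_assoc]
  linarith

lemma sphDistC_nonneg (z w : ℂ) : 0 ≤ sphDistC z w :=
  (by positivity : (0 : ℝ) ≤ 2 * ‖z - w‖ / _).trans (two_mul_chordal_le_sphDistC z w)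

lemma continuous_sphDistC_left (w : ℂ) : Continuous fun z => sphDistC z w := by
  unfold sphDistC
  have := one_le_sqrt_one_add_norm_sq w
  refine continuous_const.mul (continuous_arcsin.comp (Continuous.div (by fun_prop) (by fun_prop)
    fun z => ?_))
  have := one_le_sqrt_one_add_norm_sq z
  positivity

lemma sphDistToCompl_le_pi_div (Ω : Set ℂ) (z : ℂ) :
    sphDistToCompl Ω z ≤ π / √(1 + ‖z‖ ^ 2) := by
  have ha := one_le_sqrt_one_add_norm_sq z
  have := arcsin_le_pi_div_two_mul (t := 1 / √(1 + ‖z‖ ^ 2)) (by positivity)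
    ((div_le_one (by positivity)).2 ha)
  refine (min_le_left _ _).trans ?_
  rw [div_eq_mul_one_div π]
  linarith

lemma sphDistToCompl_le_sphDistC {Ω : Set ℂ} {w : ℂ} (hw : w ∈ Ωᶜ) (z : ℂ) :
    sphDistToCompl Ω z ≤ sphDistC z w :=
  (min_le_right _ _).trans
    (csInf_le ⟨0, by rintro _ ⟨u, _, rfl⟩; exact sphDistC_nonneg z u⟩ ⟨w, hw, rfl⟩)

lemma le_sphDistToCompl {Ω : Set ℂ} (hne : Ωᶜ.Nonempty) {z : ℂ} {r : ℝ}
    (hinf : r ≤ 2 / √(1 + ‖z‖ ^ 2))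
    (hfin : ∀ w ∈ Ωᶜ, r ≤ 2 * ‖z - w‖ / (√(1 + ‖z‖ ^ 2) * √(1 + ‖w‖ ^ 2))) :
    r ≤ sphDistToCompl Ω z := by
  have ha := one_le_sqrt_one_add_norm_sq z
  refine le_min ?_ (le_csInf (hne.image _) ?_)
  · have := self_le_arcsin (t := 1 / √(1 + ‖z‖ ^ 2)) (by positivity)
      ((div_le_one (by positivity)).2 ha)
    rw [div_eq_mul_one_div 2] at hinf
    linarith
  · rintro _ ⟨w, hw, rfl⟩
    exact (hfin w hw).trans (two_mul_chordal_le_sphDistC z w)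

lemma mul_sphDistToCompl_le_two_pi_mul_norm_sub {Ω : Set ℂ} {w : ℂ} (hw : w ∈ Ωᶜ) (z : ℂ) :
    (1 + ‖z‖ ^ 2) * sphDistToCompl Ω z ≤ 2 * π * ‖z - w‖ := by
  set a := √(1 + ‖z‖ ^ 2)
  set b := √(1 + ‖w‖ ^ 2)
  set t := ‖z - w‖
  have ha : 1 ≤ a := one_le_sqrt_one_add_norm_sq z
  have hb : 1 ≤ b := one_le_sqrt_one_add_norm_sq w
  have hab : a ≤ b + t := sqrt_one_add_norm_sq_le_add_norm_sub z w
  rw [← Real.sq_sqrt (by positivity : (0 : ℝ) ≤ 1 + ‖z‖ ^ 2)]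
  -- far from `w` compare with the distance to `∞`; near `w`, `b ≥ a - t > a / 2`
  rcases le_or_gt a (2 * t) with hat | hat
  · calc a ^ 2 * sphDistToCompl Ω z ≤ a ^ 2 * (π / a) := by
          gcongr; exact sphDistToCompl_le_pi_div Ω z
      _ = π * a := by field_simp
      _ ≤ 2 * π * t := by nlinarith [pi_pos]
  · calc a ^ 2 * sphDistToCompl Ω z ≤ a ^ 2 * (π * t / (a * b)) := by
          gcongr; exact (sphDistToCompl_le_sphDistC hw z).trans (sphDistC_le_pi_mul_chordal z w)
      _ = π * t * a / b := by field_simp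
      _ ≤ 2 * π * t := by
          rw [div_le_iff₀ (by positivity)]
          nlinarith [mul_nonneg pi_pos.le (norm_nonneg (z - w))]

lemma mul_sphDistToCompl_le_two_pi_mul_infDist {Ω : Set ℂ} (hne : Ωᶜ.Nonempty) (z : ℂ) :
    (1 + ‖z‖ ^ 2) * sphDistToCompl Ω z ≤ 2 * π * infDist z Ωᶜ := by
  rw [← div_le_iff₀' (by positivity), le_infDist hne]
  intro w hw
  rw [div_le_iff₀' (by positivity), dist_eq_norm]
  exact mul_sphDistToCompl_le_two_pi_mul_norm_sub hw z

lemma two_mul_infDist_le_mul_sphDistToCompl {Ω : Set ℂ} (hne : Ωᶜ.Nonempty) (z : ℂ) :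
    2 * infDist z Ωᶜ ≤
      (2 + infDist 0 Ωᶜ) * ((1 + ‖z‖ ^ 2) * sphDistToCompl Ω z) := by
  set a := √(1 + ‖z‖ ^ 2)
  set d := infDist z Ωᶜ
  set D := infDist 0 Ωᶜ
  have ha : 1 ≤ a := one_le_sqrt_one_add_norm_sq z
  have hd : 0 ≤ d := infDist_nonneg
  have hD : 0 ≤ D := infDist_nonneg
  have hdD : d ≤ (1 + D) * a := by
    have := infDist_le_infDist_add_dist (x := z) (y := 0) (s := Ωᶜ)
    rw [dist_zero_right] at this
    nlinarith [norm_le_sqrt_one_add_norm_sq z]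
  have has : a ^ 2 = 1 + ‖z‖ ^ 2 := Real.sq_sqrt (by positivity)
  suffices h : 2 * d / ((2 + D) * a ^ 2) ≤ sphDistToCompl Ω z by
    rw [div_le_iff₀ (by positivity), has] at h
    linarith [h]
  refine le_sphDistToCompl hne ?_ fun w hw => ?_
  · rw [div_le_div_iff₀ (by positivity) (by positivity)]
    nlinarith
  · set b := √(1 + ‖w‖ ^ 2)
    set t := ‖z - w‖
    have hb : 1 ≤ b := one_le_sqrt_one_add_norm_sq w
    have ha' : 0 ≤ a := by positivity
    have hdt : d ≤ t := (infDist_le_dist_of_mem hw).trans_eq (dist_eq_norm z w)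
    have hba : b ≤ a + t := by
      simpa [t, norm_sub_rev] using sqrt_one_add_norm_sq_le_add_norm_sub w z
    rw [div_le_div_iff₀ (by positivity) (by positivity)]
    nlinarith [mul_le_mul_of_nonneg_left hba hd, mul_le_mul_of_nonneg_right hdt ha',
      mul_le_mul_of_nonneg_right hdD (norm_nonneg (z - w))]

lemma measurable_sphDistToCompl (Ω : Set ℂ) : Measurable (sphDistToCompl Ω) := by
  have husc : UpperSemicontinuous fun z => sInf (sphDistC z '' Ωᶜ) := by
    simp_rw [sInf_image']
    exact upperSemicontinuous_ciInf
      (fun z => ⟨0, by rintro _ ⟨w, rfl⟩; exact sphDistC_nonneg z w⟩)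
      fun w => (continuous_sphDistC_left w).upperSemicontinuous
  refine Measurable.min ?_ husc.measurable
  have : ∀ z : ℂ, √(1 + ‖z‖ ^ 2) ≠ 0 := fun z => by
    have := one_le_sqrt_one_add_norm_sq z; positivity
  exact (continuous_const.mul (continuous_arcsin.comp
    (continuous_const.div (by fun_prop) this))).measurable

def smoothCurves (Ω : Set ℂ) (x y : ℂ) : Set (ℝ → ℂ) :=
  {γ | γ 0 = x ∧ γ 1 = y ∧ MapsTo γ (Icc 0 1) Ω ∧ ContDiffOn ℝ 1 γ (Icc 0 1)}

def lengthElement (ρ : ℂ → ℝ) (γ : ℝ → ℂ) (t : ℝ) : ℝ :=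
  ρ (γ t) * ‖derivWithin γ (Icc 0 1) t‖

def curveLength (ρ : ℂ → ℝ) (γ : ℝ → ℂ) : ℝ :=
  ∫ t in (0 : ℝ)..1, lengthElement ρ γ t

lemma qhDist_eq_iInf (ρ : ℂ → ℝ) (Ω : Set ℂ) (x y : ℂ) :
    qhDist ρ Ω x y = ⨅ γ : smoothCurves Ω x y, curveLength ρ γ := by
  rw [iInf, qhDist]
  congr 1
  ext L
  simp [smoothCurves, curveLength, lengthElement, eq_comm, and_assoc]

section Curve

variable {Ω : Set ℂ} {γ : ℝ → ℂ}

lemma intervalIntegrable_lengthElement_of_continuousOn {ρ : ℂ → ℝ} (hρ : ContinuousOn ρ Ω)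
    (hγΩ : MapsTo γ (Icc 0 1) Ω) (hγ : ContDiffOn ℝ 1 γ (Icc 0 1)) :
    IntervalIntegrable (lengthElement ρ γ) volume 0 1 := by
  refine ContinuousOn.intervalIntegrable ?_
  rw [uIcc_of_le zero_le_one]
  exact (hρ.comp hγ.continuousOn hγΩ).mul
    (hγ.continuousOn_derivWithin (uniqueDiffOn_Icc zero_lt_one) le_rfl).norm

lemma intervalIntegrable_lengthElement_of_le {ρ₁ ρ₂ : ℂ → ℝ} {c : ℝ} (hρ₁ : Measurable ρ₁)
    (h₀ : ∀ z ∈ Ω, 0 ≤ ρ₁ z) (hle : ∀ z ∈ Ω, ρ₁ z ≤ c * ρ₂ z)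
    (hγΩ : MapsTo γ (Icc 0 1) Ω) (hγ : ContDiffOn ℝ 1 γ (Icc 0 1))
    (h₂ : IntervalIntegrable (lengthElement ρ₂ γ) volume 0 1) :
    IntervalIntegrable (lengthElement ρ₁ γ) volume 0 1 := by
  rw [intervalIntegrable_iff_integrableOn_Icc_of_le zero_le_one] at h₂ ⊢
  have hmeas : AEStronglyMeasurable (lengthElement ρ₁ γ) (volume.restrict (Icc 0 1)) :=
    ((hρ₁.comp_aemeasurable (hγ.continuousOn.aemeasurable measurableSet_Icc)).mul
      ((hγ.continuousOn_derivWithin (uniqueDiffOn_Icc zero_lt_one) le_rfl).norm.aemeasurable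
        measurableSet_Icc)).aestronglyMeasurable
  refine (h₂.const_mul c).mono' hmeas ((ae_restrict_mem measurableSet_Icc).mono fun t ht => ?_)
  have hρ := h₀ _ (hγΩ ht)
  rw [Real.norm_of_nonneg (by unfold lengthElement; positivity), lengthElement, lengthElement,
    ← mul_assoc]
  exact mul_le_mul_of_nonneg_right (hle _ (hγΩ ht)) (norm_nonneg _)

lemma curveLength_le_const_mul {ρ₁ ρ₂ : ℂ → ℝ} {c : ℝ}
    (h₀ : ∀ z ∈ Ω, 0 ≤ ρ₁ z) (hle : ∀ z ∈ Ω, ρ₁ z ≤ c * ρ₂ z) (hγΩ : MapsTo γ (Icc 0 1) Ω)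
    (h₂ : IntervalIntegrable (lengthElement ρ₂ γ) volume 0 1) :
    curveLength ρ₁ γ ≤ c * curveLength ρ₂ γ := by
  rw [intervalIntegrable_iff_integrableOn_Icc_of_le zero_le_one] at h₂
  rw [curveLength, curveLength, ← intervalIntegral.integral_const_mul,
    intervalIntegral.integral_of_le zero_le_one, intervalIntegral.integral_of_le zero_le_one,
    ← integral_Icc_eq_integral_Ioc, ← integral_Icc_eq_integral_Ioc]
  refine setIntegral_mono_of_nonneg (fun t ht => ?_) (fun t ht => ?_) (h₂.const_mul c)
  · exact mul_nonneg (h₀ _ (hγΩ ht)) (norm_nonneg _)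
  · rw [lengthElement, lengthElement, ← mul_assoc]
    exact mul_le_mul_of_nonneg_right (hle _ (hγΩ ht)) (norm_nonneg _)

end Curve

lemma qhDist_le_const_mul {Ω : Set ℂ} {x y : ℂ} {ρ₁ ρ₂ : ℂ → ℝ} {c : ℝ} (hc : 0 ≤ c)
    (h₀ : ∀ z ∈ Ω, 0 ≤ ρ₁ z) (hle : ∀ z ∈ Ω, ρ₁ z ≤ c * ρ₂ z)
    (h₂ : ∀ γ ∈ smoothCurves Ω x y, IntervalIntegrable (lengthElement ρ₂ γ) volume 0 1) :
    qhDist ρ₁ Ω x y ≤ c * qhDist ρ₂ Ω x y := by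
  rw [qhDist_eq_iInf, qhDist_eq_iInf, Real.mul_iInf_of_nonneg hc]
  refine ciInf_mono ⟨0, ?_⟩ fun γ => curveLength_le_const_mul h₀ hle γ.2.2.2.1 (h₂ γ γ.2)
  rintro _ ⟨γ, rfl⟩
  exact intervalIntegral.integral_nonneg zero_le_one fun t ht =>
    mul_nonneg (h₀ _ (γ.2.2.2.1 ht)) (norm_nonneg _)

section Densities

variable {Ω : Set ℂ} {z : ℂ}

lemma infDist_compl_pos (hΩ : IsOpen Ω) (hne : Ωᶜ.Nonempty) (hz : z ∈ Ω) :
    0 < infDist z Ωᶜ :=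
  (hΩ.isClosed_compl.notMem_iff_infDist_pos hne).1 (not_not_intro hz)

lemma mul_sphDistToCompl_pos (hΩ : IsOpen Ω) (hne : Ωᶜ.Nonempty) (hz : z ∈ Ω) :
    0 < (1 + ‖z‖ ^ 2) * sphDistToCompl Ω z := by
  have := two_mul_infDist_le_mul_sphDistToCompl hne z
  have := infDist_compl_pos hΩ hne hz
  have : 0 ≤ infDist 0 Ωᶜ := infDist_nonneg
  nlinarith

lemma inv_infDist_le_pi_mul (hΩ : IsOpen Ω) (hne : Ωᶜ.Nonempty) (hz : z ∈ Ω) :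
    (infDist z Ωᶜ)⁻¹ ≤ π * (2 / ((1 + ‖z‖ ^ 2) * sphDistToCompl Ω z)) := by
  have hs := mul_sphDistToCompl_pos hΩ hne hz
  rw [mul_div_assoc', ← mul_comm 2, inv_le_iff_one_le_mul₀ (infDist_compl_pos hΩ hne hz),
    div_mul_eq_mul_div, one_le_div hs]
  linarith [mul_sphDistToCompl_le_two_pi_mul_infDist hne z]

lemma two_div_mul_sphDistToCompl_le (hΩ : IsOpen Ω) (hne : Ωᶜ.Nonempty) (hz : z ∈ Ω) :
    2 / ((1 + ‖z‖ ^ 2) * sphDistToCompl Ω z) ≤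
      (2 + infDist 0 Ωᶜ) * (infDist z Ωᶜ)⁻¹ := by
  rw [div_le_iff₀ (mul_sphDistToCompl_pos hΩ hne hz), ← div_eq_mul_inv, div_mul_eq_mul_div,
    le_div_iff₀ (infDist_compl_pos hΩ hne hz)]
  linarith [two_mul_infDist_le_mul_sphDistToCompl hne z]

end Densities

theorem statement_10_general (Ω : Set ℂ) (hΩo : IsOpen Ω)
    (hne : Ωᶜ.Nonempty) (D : ℝ) (hD : D = Metric.infDist 0 Ωᶜ)
    (x y : ℂ) :
    (Real.pi * Real.sqrt 2)⁻¹ * qhDist (fun z => (Metric.infDist z Ωᶜ)⁻¹) Ω x y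
        ≤ qhDist (fun z => 2 / ((1 + ‖z‖ ^ 2) * sphDistToCompl Ω z)) Ω x y ∧
      qhDist (fun z => 2 / ((1 + ‖z‖ ^ 2) * sphDistToCompl Ω z)) Ω x y
        ≤ 3 * (2 + D) * qhDist (fun z => (Metric.infDist z Ωᶜ)⁻¹) Ω x y := by
  subst hD
  have hD : 0 ≤ infDist 0 Ωᶜ := infDist_nonneg
  have hσ_nonneg (z) (hz : z ∈ Ω) : 0 ≤ 2 / ((1 + ‖z‖ ^ 2) * sphDistToCompl Ω z) :=
    div_nonneg zero_le_two (mul_sphDistToCompl_pos hΩo hne hz).le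
  have he_le (z) (hz : z ∈ Ω) : (infDist z Ωᶜ)⁻¹ ≤
      π * √2 * (2 / ((1 + ‖z‖ ^ 2) * sphDistToCompl Ω z)) := by
    refine (inv_infDist_le_pi_mul hΩo hne hz).trans ?_
    have := hσ_nonneg z hz
    gcongr
    exact le_mul_of_one_le_right pi_pos.le (Real.one_le_sqrt.2 one_le_two)
  have hσ_le (z) (hz : z ∈ Ω) : 2 / ((1 + ‖z‖ ^ 2) * sphDistToCompl Ω z) ≤
      3 * (2 + infDist 0 Ωᶜ) * (infDist z Ωᶜ)⁻¹ := by
    refine (two_div_mul_sphDistToCompl_le hΩo hne hz).trans ?_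
    have := (infDist_compl_pos hΩo hne hz).le
    gcongr
    linarith
  have hσ_meas : Measurable fun z => 2 / ((1 + ‖z‖ ^ 2) * sphDistToCompl Ω z) :=
    measurable_const.div ((by fun_prop : Continuous fun z : ℂ => 1 + ‖z‖ ^ 2).measurable.mul
      (measurable_sphDistToCompl Ω))
  have he_int (γ) (hγ : γ ∈ smoothCurves Ω x y) :
      IntervalIntegrable (lengthElement (fun z => (infDist z Ωᶜ)⁻¹) γ) volume 0 1 :=
    intervalIntegrable_lengthElement_of_continuousOn
      ((continuous_infDist_pt _).continuousOn.inv₀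
        fun z hz => (infDist_compl_pos hΩo hne hz).ne') hγ.2.2.1 hγ.2.2.2
  constructor
  · rw [inv_mul_le_iff₀ (by positivity)]
    exact qhDist_le_const_mul (by positivity) (fun z _ => inv_nonneg.2 infDist_nonneg) he_le
      fun γ hγ => intervalIntegrable_lengthElement_of_le hσ_meas hσ_nonneg hσ_le hγ.2.2.1
        hγ.2.2.2 (he_int γ hγ)
  · exact qhDist_le_const_mul (by positivity) hσ_nonneg hσ_le he_int

/-- Comparison of the Euclidean and spherical quasihyperbolic metrics of a
plane domain `Ω` (viewed in `Ĉ` with `∞ ∉ Ω`) whose boundary has at least two points: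
`(π√2)⁻¹ k^e_Ω ≤ k^σ_Ω ≤ 3(2+D) k^e_Ω` where `D = dist_e(0, Ĉ \ Ω)`. -/
theorem statement_10 (Ω : Set ℂ) (hΩo : IsOpen Ω) (hΩc : IsConnected Ω)
    (hne : Ωᶜ.Nonempty) (D : ℝ) (hD : D = Metric.infDist 0 Ωᶜ)
    (x y : ℂ) (hx : x ∈ Ω) (hy : y ∈ Ω) :
    (Real.pi * Real.sqrt 2)⁻¹ * qhDist (fun z => (Metric.infDist z Ωᶜ)⁻¹) Ω x y
        ≤ qhDist (fun z => 2 / ((1 + ‖z‖ ^ 2) * sphDistToCompl Ω z)) Ω x y ∧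
      qhDist (fun z => 2 / ((1 + ‖z‖ ^ 2) * sphDistToCompl Ω z)) Ω x y
        ≤ 3 * (2 + D) * qhDist (fun z => (Metric.infDist z Ωᶜ)⁻¹) Ω x y :=
  statement_10_general Ω hΩo hne D hD x y
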